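/- arXiv:1810.07220 — 2 statements merged into one kernel-verified Lean document; each statement's English description precedes it below -/
import Mathlib

section
/- For every temperature T > 0, every cost function C : 𝒱 → ℝ, and all sets S, S' ∈ 𝒱, the detailed balance condition π_T(S)·P_T(S, S') = π_T(S')·P_T(S', S) holds; in particular the Markov chain with transition matrix P_T is reversible with respect to π_T. -/
open Finset

variable {V : Type*} [Fintype V] [DecidableEq V]

/-- The collection of sets obtained from `S` by adding one new vertex. -/
def N1 (S : Finset V) : Finset (Finset V) := Sᶜ.image fun x => insert x S

/-- The collection of sets obtained from `S` by removing one vertex. -/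
def N2 (S : Finset V) : Finset (Finset V) := S.image fun x => S.erase x

/-- The collection of sets obtained from `S` by swapping one vertex of `S`
with one vertex outside `S`. -/
def N3 (S : Finset V) : Finset (Finset V) :=
  (Sᶜ ×ˢ S).image fun p => (insert p.1 S).erase p.2


lemma mem_N1 {S S' : Finset V} : S' ∈ N1 S ↔ ∃ x, x ∉ S ∧ S' = insert x S := by
  simp [N1, eq_comm]

lemma mem_N2 {S S' : Finset V} : S' ∈ N2 S ↔ ∃ x, x ∈ S ∧ S' = S.erase x := by
  simp [N2, eq_comm]

lemma mem_N3 {S S' : Finset V} :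
    S' ∈ N3 S ↔ ∃ x x', x ∉ S ∧ x' ∈ S ∧ S' = (insert x S).erase x' := by
  simp [N3, eq_comm]
  aesop

lemma card_N1 {S S' : Finset V} (h : S' ∈ N1 S) : S'.card = S.card + 1 := by
  obtain ⟨x, hx, rfl⟩ := mem_N1.1 h
  rw [card_insert_of_notMem hx]

lemma card_N2 {S S' : Finset V} (h : S' ∈ N2 S) : S'.card + 1 = S.card := by
  obtain ⟨x, hx, rfl⟩ := mem_N2.1 h
  rw [card_erase_of_mem hx]
  exact Nat.succ_pred_eq_of_pos (card_pos.2 ⟨x, hx⟩)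

lemma card_N3 {S S' : Finset V} (h : S' ∈ N3 S) : S'.card = S.card := by
  obtain ⟨x, x', hx, hx', rfl⟩ := mem_N3.1 h
  have hne : x ≠ x' := fun e => hx (e ▸ hx')
  rw [card_erase_of_mem (mem_insert_of_mem hx'), card_insert_of_notMem hx]
  omega

lemma N1_N2_symm {S S' : Finset V} (h : S' ∈ N1 S) : S ∈ N2 S' := by
  obtain ⟨x, hx, rfl⟩ := mem_N1.1 h
  exact mem_N2.2 ⟨x, mem_insert_self x S, by rw [erase_insert hx]⟩

lemma N2_N1_symm {S S' : Finset V} (h : S' ∈ N2 S) : S ∈ N1 S' := by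
  obtain ⟨x, hx, rfl⟩ := mem_N2.1 h
  exact mem_N1.2 ⟨x, notMem_erase x S, by rw [insert_erase hx]⟩

lemma N3_symm {S S' : Finset V} (h : S' ∈ N3 S) : S ∈ N3 S' := by
  obtain ⟨x, x', hx, hx', rfl⟩ := mem_N3.1 h
  have hne : x ≠ x' := fun e => hx (e ▸ hx')
  refine mem_N3.2 ⟨x', x, ?_, ?_, ?_⟩
  · simp [hne.symm, hx']
  · simp [hne, mem_insert_of_mem hx']
  · rw [insert_erase (mem_insert_of_mem hx'), erase_insert hx]

lemma exp_min {T : ℝ} (hT : 0 < T) (a b : ℝ) :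
    Real.exp (-a / T) * min (Real.exp ((a - b) / T)) 1
      = min (Real.exp (-b / T)) (Real.exp (-a / T)) := by
  rw [mul_min_of_nonneg _ _ (Real.exp_nonneg _), mul_one, ← Real.exp_add]
  congr 2
  field_simp
  ring

/-- Off-diagonal transition probabilities of the Metropolis chain. -/
noncomputable def Poff (C : Finset V → ℝ) (T : ℝ) (S S' : Finset V) : ℝ :=
  if S' ∈ N1 S ∪ N2 S then
    (2 / (3 * (Fintype.card V : ℝ))) * min (Real.exp ((C S - C S') / T)) 1
  else if S' ∈ N3 S then
    (1 / (3 * (S.card : ℝ) * ((Fintype.card V : ℝ) - (S.card : ℝ)))) *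
      min (Real.exp ((C S - C S') / T)) 1
  else 0

/-- The transition matrix `P_T` of the Metropolis chain: off the diagonal it is
given by `Poff`, and the diagonal entry is `1` minus the sum of the off-diagonal
entries in the row. -/
noncomputable def Ptrans (C : Finset V → ℝ) (T : ℝ) (S S' : Finset V) : ℝ :=
  if S' = S then 1 - ∑ S'' ∈ univ.erase S, Poff C T S S''
  else Poff C T S S'

lemma Poff_balance (C : Finset V → ℝ) {T : ℝ} (hT : 0 < T) (S S' : Finset V) :
    Real.exp (-C S / T) * Poff C T S S' = Real.exp (-C S' / T) * Poff C T S' S := by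
  by_cases h1 : S' ∈ N1 S ∪ N2 S
  · have h1' : S ∈ N1 S' ∪ N2 S' := by
      rcases mem_union.1 h1 with h | h
      exacts [mem_union_right _ (N1_N2_symm h), mem_union_left _ (N2_N1_symm h)]
    rw [Poff, Poff, if_pos h1, if_pos h1', mul_left_comm,
      mul_left_comm (Real.exp (-C S' / T)), exp_min hT, exp_min hT, min_comm]
  · by_cases h3 : S' ∈ N3 S
    · have h3' := N3_symm h3
      have hcard := card_N3 h3
      have h1' : S ∉ N1 S' ∪ N2 S' := by
        intro h
        rcases mem_union.1 h with h | h
        · have := card_N1 h; omega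
        · have := card_N2 h; omega
      rw [Poff, Poff, if_neg h1, if_neg h1', if_pos h3, if_pos h3', hcard, mul_left_comm,
        mul_left_comm (Real.exp (-C S' / T)), exp_min hT, exp_min hT, min_comm]
    · have h1' : S ∉ N1 S' ∪ N2 S' := by
        intro h
        rcases mem_union.1 h with h | h
        exacts [h1 (mem_union_right _ (N1_N2_symm h)), h1 (mem_union_left _ (N2_N1_symm h))]
      have h3' : S ∉ N3 S' := fun h => h3 (N3_symm h)
      rw [Poff, Poff, if_neg h1, if_neg h1', if_neg h3, if_neg h3', mul_zero, mul_zero]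


/-- The Gibbs distribution at temperature `T` for the cost function `C`. -/
noncomputable def gibbs (C : Finset V → ℝ) (T : ℝ) (S : Finset V) : ℝ :=
  Real.exp (-C S / T) / ∑ S₁ : Finset V, Real.exp (-C S₁ / T)

/-- Detailed balance: the Metropolis chain `P_T` is reversible
with respect to the Gibbs distribution `π_T`. -/
theorem gibbs_detailed_balance (hn : 1 ≤ Fintype.card V) (C : Finset V → ℝ) (T : ℝ)
    (hT : 0 < T) :
    ∀ S S' : Finset V, gibbs C T S * Ptrans C T S S' = gibbs C T S' * Ptrans C T S' S := by
  intro S S'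
  by_cases h : S' = S
  · subst h; rfl
  · rw [Ptrans, Ptrans, if_neg h, if_neg fun e => h e.symm, gibbs, gibbs,
      div_mul_eq_mul_div, div_mul_eq_mul_div, Poff_balance C hT S S']
end

section
/- If S ⊆ V has W(S) ∪ W_×(S) ≠ ∅, then the enlarged set S' = S ∪ W(S) ∪ W_×(S) is feasible (W(S') = ∅ and W_×(S') = ∅) and has strictly smaller cost: C(S') < C(S). Consequently every local (and global) minimizer of C is a feasible set. -/
open Finset
open scoped Classical

/-- One-step forcing operator of the zero forcing process in a loop directed
graph with edge relation `E` (`E u v` means there is an edge from `u` to `v`,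
i.e. `v` is an out-neighbor of `u`): to the black set `B` we add every white
vertex `v` that is the unique out-neighbor, not in `B`, of some vertex `u`. -/
noncomputable def forceStep {V : Type*} [Fintype V] (E : V → V → Prop)
    (B : Finset V) : Finset V :=
  B ∪ univ.filter fun v => v ∉ B ∧ ∃ u, E u v ∧ ∀ w, E u w → w ∉ B → w = v

/-- The zero forcing closure of `S`: iterate the one-step forcing operator
`|V|` times. -/
noncomputable def zfClosure {V : Type*} [Fintype V] (E : V → V → Prop)
    (S : Finset V) : Finset V :=
  (forceStep E)^[Fintype.card V] S

/-- One-step forcing operator of the restricted zero forcing process: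
a force `u → v` with `u = v` is forbidden whenever `forbid v` holds. -/
noncomputable def forceStepR {V : Type*} [Fintype V] (E : V → V → Prop)
    (forbid : V → Prop) (B : Finset V) : Finset V :=
  B ∪ univ.filter fun v => v ∉ B ∧
    ∃ u, E u v ∧ (∀ w, E u w → w ∉ B → w = v) ∧ ¬(u = v ∧ forbid v)

/-- The restricted zero forcing closure. -/
noncomputable def zfClosureR {V : Type*} [Fintype V] (E : V → V → Prop)
    (forbid : V → Prop) (S : Finset V) : Finset V :=
  (forceStepR E forbid)^[Fintype.card V] S

/- For a pattern matrix `A ∈ {0,×}^{n×n}`, modelled as `A : Fin n → Fin n → Prop`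
with `A i j` meaning `A_{ij} = ×`, the graph `G(A)` has an edge `(x_j, x_i)` iff
`A i j = ×`, i.e. its edge relation is `fun u v => A v u`.  The modified pattern
`A_×` replaces every zero diagonal entry of `A` by `×`, so the edge relation of
`G(A_×)` is `fun u v => A v u ∨ u = v`, and in `G(A_×)` self-forces `x → x` are
forbidden at every vertex `x` with `A x x = ×`. -/

/-- The stalled white set `W(S)` of the zero forcing process in `G(A)`. -/
noncomputable def WA {n : ℕ} (A : Fin n → Fin n → Prop) (S : Finset (Fin n)) :
    Finset (Fin n) :=
  (zfClosure (fun u v => A v u) S)ᶜ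

/-- The stalled white set `W_×(S)` of the restricted zero forcing process in
`G(A_×)`. -/
noncomputable def Wx {n : ℕ} (A : Fin n → Fin n → Prop) (S : Finset (Fin n)) :
    Finset (Fin n) :=
  (zfClosureR (fun u v => A v u ∨ u = v) (fun v => A v v) S)ᶜ

/-- `S` is feasible if the zero forcing process from `S` in `G(A)` and the
restricted zero forcing process from `S` in `G(A_×)` both colour every vertex
black. -/
def Feasible {n : ℕ} (A : Fin n → Fin n → Prop) (S : Finset (Fin n)) : Prop :=
  WA A S = ∅ ∧ Wx A S = ∅

/-- The cost function `C(S) = |S| + (1+ε)·|W(S) ∪ W_×(S)|`. -/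
noncomputable def zcost {n : ℕ} (A : Fin n → Fin n → Prop) (ε : ℝ)
    (S : Finset (Fin n)) : ℝ :=
  (S.card : ℝ) + (1 + ε) * ((WA A S ∪ Wx A S).card : ℝ)

lemma iterate_extensive' {V : Type*} (f : Finset V → Finset V)
    (hext : ∀ B, B ⊆ f B) (k : ℕ) (S : Finset V) : S ⊆ f^[k] S := by
  induction k with
  | zero => simp
  | succ k ih => rw [Function.iterate_succ_apply']; exact ih.trans (hext _)

lemma iterate_mono' {V : Type*} (f : Finset V → Finset V)
    (hmono : ∀ {B B' : Finset V}, B ⊆ B' → f B ⊆ f B') (k : ℕ)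
    {S S' : Finset V} (h : S ⊆ S') : f^[k] S ⊆ f^[k] S' := by
  induction k with
  | zero => simpa
  | succ k ih => rw [Function.iterate_succ_apply', Function.iterate_succ_apply']
                 exact hmono ih

lemma forceStep_mono {V : Type*} [Fintype V] (E : V → V → Prop)
    {B B' : Finset V} (h : B ⊆ B') : forceStep E B ⊆ forceStep E B' := by
  intro v hv
  rcases Finset.mem_union.1 hv with hv | hv
  · exact Finset.mem_union_left _ (h hv)
  · simp only [Finset.mem_filter, Finset.mem_univ, true_and] at hv
    obtain ⟨hvB, u, huv, hu⟩ := hv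
    by_cases hvB' : v ∈ B'
    · exact Finset.mem_union_left _ hvB'
    · refine Finset.mem_union_right _ ?_
      simp only [Finset.mem_filter, Finset.mem_univ, true_and]
      exact ⟨hvB', u, huv, fun w hw hwB' => hu w hw (fun hwB => hwB' (h hwB))⟩

lemma forceStepR_mono {V : Type*} [Fintype V] (E : V → V → Prop)
    (forbid : V → Prop) {B B' : Finset V} (h : B ⊆ B') :
    forceStepR E forbid B ⊆ forceStepR E forbid B' := by
  intro v hv
  rcases Finset.mem_union.1 hv with hv | hv
  · exact Finset.mem_union_left _ (h hv)
  · simp only [Finset.mem_filter, Finset.mem_univ, true_and] at hv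
    obtain ⟨hvB, u, huv, hu, hnf⟩ := hv
    by_cases hvB' : v ∈ B'
    · exact Finset.mem_union_left _ hvB'
    · refine Finset.mem_union_right _ ?_
      simp only [Finset.mem_filter, Finset.mem_univ, true_and]
      exact ⟨hvB', u, huv, fun w hw hwB' => hu w hw (fun hwB => hwB' (h hwB)), hnf⟩

lemma zfClosure_mono {V : Type*} [Fintype V] (E : V → V → Prop)
    {S S' : Finset V} (h : S ⊆ S') : zfClosure E S ⊆ zfClosure E S' :=
  iterate_mono' _ (fun hh => forceStep_mono E hh) _ h

lemma subset_zfClosure {V : Type*} [Fintype V] (E : V → V → Prop)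
    (S : Finset V) : S ⊆ zfClosure E S :=
  iterate_extensive' _ (fun _ => Finset.subset_union_left) _ S

lemma zfClosureR_mono {V : Type*} [Fintype V] (E : V → V → Prop)
    (forbid : V → Prop) {S S' : Finset V} (h : S ⊆ S') :
    zfClosureR E forbid S ⊆ zfClosureR E forbid S' :=
  iterate_mono' _ (fun hh => forceStepR_mono E forbid hh) _ h

lemma subset_zfClosureR {V : Type*} [Fintype V] (E : V → V → Prop)
    (forbid : V → Prop) (S : Finset V) : S ⊆ zfClosureR E forbid S :=
  iterate_extensive' _ (fun _ => Finset.subset_union_left) _ S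

/-- if `W(S) ∪ W_×(S) ≠ ∅`, then `S' = S ∪ W(S) ∪ W_×(S)` is feasible
and has strictly smaller cost; consequently every global minimizer of the cost
function is feasible. -/
theorem enlarge_feasible_and_cheaper {n : ℕ} (A : Fin n → Fin n → Prop) (ε : ℝ)
    (hε : 0 < ε) :
    (∀ S : Finset (Fin n), WA A S ∪ Wx A S ≠ ∅ →
      Feasible A (S ∪ WA A S ∪ Wx A S) ∧
      zcost A ε (S ∪ WA A S ∪ Wx A S) < zcost A ε S) ∧
    (∀ S : Finset (Fin n), (∀ S' : Finset (Fin n), zcost A ε S ≤ zcost A ε S') →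
      Feasible A S) := by
  have hmain : ∀ S : Finset (Fin n), WA A S ∪ Wx A S ≠ ∅ →
      Feasible A (S ∪ WA A S ∪ Wx A S) ∧
      zcost A ε (S ∪ WA A S ∪ Wx A S) < zcost A ε S := by
    intro S hne
    set T := S ∪ WA A S ∪ Wx A S with hT
    have hST : S ⊆ T := Finset.subset_union_left.trans Finset.subset_union_left
    have hWAT : WA A S ⊆ T := Finset.subset_union_right.trans Finset.subset_union_left
    have hWxT : Wx A S ⊆ T := Finset.subset_union_right
    have hfeas : Feasible A T := by
      constructor
      · rw [WA, Finset.compl_eq_empty_iff, Finset.eq_univ_iff_forall]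
        intro v
        by_cases hv : v ∈ zfClosure (fun u v => A v u) S
        · exact zfClosure_mono _ hST hv
        · have : v ∈ WA A S := by
            rw [WA, Finset.mem_compl]; exact hv
          exact subset_zfClosure _ _ (hWAT this)
      · rw [Wx, Finset.compl_eq_empty_iff, Finset.eq_univ_iff_forall]
        intro v
        by_cases hv : v ∈ zfClosureR (fun u v => A v u ∨ u = v) (fun v => A v v) S
        · exact zfClosureR_mono _ _ hST hv
        · have : v ∈ Wx A S := by
            rw [Wx, Finset.mem_compl]; exact hv
          exact subset_zfClosureR _ _ _ (hWxT this)
    refine ⟨hfeas, ?_⟩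
    have hzero : (WA A T ∪ Wx A T).card = 0 := by
      rw [hfeas.1, hfeas.2]; simp
    have hcardT : T.card ≤ S.card + (WA A S ∪ Wx A S).card := by
      calc T.card = (S ∪ (WA A S ∪ Wx A S)).card := by rw [hT, Finset.union_assoc]
        _ ≤ S.card + (WA A S ∪ Wx A S).card := Finset.card_union_le _ _
    have hU1 : 1 ≤ ((WA A S ∪ Wx A S).card : ℝ) := by
      have := Finset.card_pos.2 (Finset.nonempty_of_ne_empty hne)
      exact_mod_cast this
    have hcT : (T.card : ℝ) ≤ (S.card : ℝ) + ((WA A S ∪ Wx A S).card : ℝ) := by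
      exact_mod_cast hcardT
    rw [zcost, zcost, hzero]
    push_cast
    nlinarith
  refine ⟨hmain, ?_⟩
  intro S hmin
  by_cases h : WA A S ∪ Wx A S = ∅
  · rcases Finset.union_eq_empty.1 h with ⟨h1, h2⟩
    exact ⟨h1, h2⟩
  · exact absurd (hmin _) (not_le.2 (hmain S h).2)
end
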